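/- arXiv:1612.07588 — 4 statements merged into one kernel-verified Lean document; each statement's English description precedes it below -/
import Mathlib

section
/- Let Γ be a group and v ∈ Γ an element such that N(v) = Z(v)/v^ℤ is finite, and let σ' : N(v) → Z(v) be a set-theoretic section of the quotient map Z(v) → N(v). Define N_{σ'} on C_n(Γ,ℂv) by N_{σ'}[g₀,…,gₙ;v] = |N(v)|^{−1} Σ_{h∈N(v)} [σ'(h)g₀,…,σ'(h)gₙ;v]. Then for every n and every c ∈ C_n(Γ,ℂv): if p_v(c) lies in (Id − T_n)((ℂΓ)^{⊗(n+1)}), then N_{σ'}(c) lies in (Id − T̃_n)(C_n(Γ,ℂv)). -/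
noncomputable section

open Finsupp

/-- `C_*(Γ,ℂv)` for a fixed `v`: free `ℂ`-vector space on the tuples `[g₀,…,gₙ]`
(the twisting element `v` is a fixed parameter). -/
abbrev BarC (Γ : Type) (n : ℕ) : Type := (Fin (n+1) → Γ) →₀ ℂ

/-- The simplicial differential on `C_*(Γ,ℂv)`. -/
def barD (Γ : Type) (n : ℕ) : BarC Γ (n+1) →ₗ[ℂ] BarC Γ n :=
  Finsupp.lsum ℂ fun x => ∑ i : Fin (n+2), ((-1:ℂ)^(i:ℕ)) •
    (Finsupp.lsingle (x ∘ i.succAbove) : ℂ →ₗ[ℂ] BarC Γ n)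

/-- The Hochschild chains `C̃_n(ℂΓ) = (ℂΓ)^{⊗(n+1)}`, with basis `h₀⊗…⊗hₙ`. -/
abbrev Htens (Γ : Type) (n : ℕ) : Type := (Fin (n+1) → Γ) →₀ ℂ

/-- The cyclic operator `T_n(h₀⊗…⊗hₙ) = (−1)^n hₙ⊗h₀⊗…⊗h_{n−1}`. -/
def cycT (Γ : Type) (n : ℕ) : Htens Γ n →ₗ[ℂ] Htens Γ n :=
  Finsupp.lsum ℂ fun h => ((-1:ℂ)^n) •
    (Finsupp.lsingle (fun j : Fin (n+1) => h (j - 1)) : ℂ →ₗ[ℂ] Htens Γ n)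

/-- The lifted cyclic operator `T̃_n[g₀,…,gₙ;v] = (−1)^n [v⁻¹gₙ,g₀,…,g_{n−1};v]`. -/
def cycTt {Γ : Type} [Group Γ] (v : Γ) (n : ℕ) : BarC Γ n →ₗ[ℂ] BarC Γ n :=
  Finsupp.lsum ℂ fun g => ((-1:ℂ)^n) •
    (Finsupp.lsingle (fun j : Fin (n+1) =>
      if j = 0 then v⁻¹ * g (Fin.last n) else g (j - 1)) : ℂ →ₗ[ℂ] BarC Γ n)

/-- The tuple `(gₙ⁻¹vg₀, g₀⁻¹g₁, …, g_{n−1}⁻¹gₙ)`. -/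
def pTuple {Γ : Type} [Group Γ] {n : ℕ} (v : Γ) (g : Fin (n+1) → Γ) : Fin (n+1) → Γ :=
  fun j => if h : (j:ℕ) = 0 then (g (Fin.last n))⁻¹ * v * g 0
    else (g ⟨(j:ℕ)-1, by have := j.isLt; omega⟩)⁻¹ * g j

/-- The map `p_v[g₀,…,gₙ;v] = (gₙ⁻¹vg₀)⊗(g₀⁻¹g₁)⊗…⊗(g_{n−1}⁻¹gₙ)`. -/
def pMap {Γ : Type} [Group Γ] (v : Γ) (n : ℕ) : BarC Γ n →ₗ[ℂ] Htens Γ n :=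
  Finsupp.lsum ℂ fun g => (Finsupp.lsingle (pTuple v g) : ℂ →ₗ[ℂ] Htens Γ n)

/-- The centralizer `Z(v)`. -/
abbrev Zc {Γ : Type} [Group Γ] (v : Γ) : Subgroup Γ := Subgroup.centralizer {v}

/-- The quotient `N(v) = Z(v)/v^ℤ` (as a quotient by the subgroup of `Z(v)`
induced by the powers of `v`). -/
abbrev Nquot {Γ : Type} [Group Γ] (v : Γ) :=
  Zc v ⧸ (Subgroup.zpowers v).subgroupOf (Zc v)

/-- The averaging operator
`N_{σ'}[g₀,…,gₙ;v] = |N(v)|⁻¹ Σ_{h∈N(v)} [σ'(h)g₀,…,σ'(h)gₙ;v]`. -/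
def Nsig {Γ : Type} [Group Γ] (v : Γ) [Finite (Nquot v)] (σ' : Nquot v → Zc v)
    (n : ℕ) : BarC Γ n →ₗ[ℂ] BarC Γ n :=
  haveI := Fintype.ofFinite (Nquot v)
  ((Nat.card (Nquot v) : ℂ))⁻¹ • ∑ h : Nquot v,
    (Finsupp.lmapDomain ℂ ℂ fun g => fun j => ((σ' h : Γ) * g j) :
      BarC Γ n →ₗ[ℂ] BarC Γ n)

set_option linter.unusedSectionVars false

namespace AvgAux

open Finsupp

variable {Γ : Type} [Group Γ]

/-! ### Fin helpers -/

lemma fin_sub_one_val {n : ℕ} (j : Fin (n+1)) :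
    ((j - 1 : Fin (n+1)) : ℕ) = if (j:ℕ) = 0 then n else (j:ℕ) - 1 := by
  rw [Fin.sub_def]
  have h1 : ((1 : Fin (n+1)) : ℕ) = 1 % (n+1) := Fin.val_one' (n+1)
  rw [h1]
  have hj := j.isLt
  rcases n with _ | m
  · simp
  · have h2 : 1 % (m+2) = 1 := Nat.mod_eq_of_lt (by omega)
    rw [h2]
    by_cases hv : (j:ℕ) = 0
    · rw [if_pos hv, hv]
      show (m+2 - 1 + 0) % (m+2) = m+1
      rw [Nat.add_zero]
      exact Nat.mod_eq_of_lt (by omega)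
    · rw [if_neg hv]
      show (m+2 - 1 + (j:ℕ)) % (m+2) = (j:ℕ) - 1
      have he : m+2 - 1 + (j:ℕ) = (m+2) + ((j:ℕ) - 1) := by omega
      rw [he, Nat.add_mod_left]
      exact Nat.mod_eq_of_lt (by omega)

lemma fin_zero_sub_one {n : ℕ} : ((0:Fin (n+1)) - 1) = Fin.last n := by
  apply Fin.ext
  rw [fin_sub_one_val]
  simp

/-! ### The shift on tuples -/

/-- The tuple of `T̃[g]` (without the sign). -/
def shiftT {n : ℕ} (v : Γ) (g : Fin (n+1) → Γ) : Fin (n+1) → Γ :=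
  fun j : Fin (n+1) => if j = 0 then v⁻¹ * g (Fin.last n) else g (j - 1)

lemma shiftT_apply {n : ℕ} (v : Γ) (g : Fin (n+1) → Γ) (j : Fin (n+1)) :
    shiftT v g j = (if j = 0 then v⁻¹ else 1) * g (j - 1) := by
  unfold shiftT
  by_cases h : j = 0
  · rw [if_pos h, if_pos h, h, fin_zero_sub_one]
  · rw [if_neg h, if_neg h, one_mul]

lemma cycTt_single {n : ℕ} (v : Γ) (g : Fin (n+1) → Γ) :
    cycTt v n (single g (1:ℂ)) = ((-1:ℂ)^n) • single (shiftT v g) 1 := by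
  rw [cycTt, Finsupp.lsum_single]
  rfl

lemma pMap_single {n : ℕ} (v : Γ) (g : Fin (n+1) → Γ) :
    pMap v n (single g (1:ℂ)) = single (pTuple v g) 1 := by
  rw [pMap, Finsupp.lsum_single]
  rfl


/-! ### Left multiplication operators -/

/-- Left multiplication by `w` on all coordinates. -/
def Lmul (w : Γ) (n : ℕ) : BarC Γ n →ₗ[ℂ] BarC Γ n :=
  Finsupp.lmapDomain ℂ ℂ fun g => fun j : Fin (n+1) => w * g j

lemma Lmul_single {n : ℕ} (w : Γ) (g : Fin (n+1) → Γ) (c : ℂ) :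
    Lmul w n (single g c) = single (fun j => w * g j) c := by
  rw [Lmul, Finsupp.lmapDomain_apply, Finsupp.mapDomain_single]

lemma Lmul_one (n : ℕ) : Lmul (1:Γ) n = LinearMap.id := by
  apply Finsupp.lhom_ext
  intro g c
  rw [Lmul_single]
  simp

lemma Lmul_mul (w₁ w₂ : Γ) (n : ℕ) :
    Lmul (w₁ * w₂) n = (Lmul w₁ n) ∘ₗ (Lmul w₂ n) := by
  apply Finsupp.lhom_ext
  intro g c
  rw [LinearMap.comp_apply, Lmul_single, Lmul_single, Lmul_single]
  simp [mul_assoc]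

lemma mem_Zc {v u : Γ} (h : u ∈ Zc v) : v * u = u * v :=
  Subgroup.mem_centralizer_iff.mp h v rfl

lemma Lmul_comm_cycTt {v u : Γ} (hu : u ∈ Zc v) (n : ℕ) :
    (Lmul u n) ∘ₗ (cycTt v n) = (cycTt v n) ∘ₗ (Lmul u n) := by
  have hc : v⁻¹ * u = u * v⁻¹ := by
    have h := mem_Zc hu
    rw [inv_mul_eq_iff_eq_mul, ← mul_assoc, h, mul_assoc, mul_inv_cancel, mul_one]
  apply Finsupp.lhom_ext
  intro g c
  have h1 : single g c = c • single g (1:ℂ) := by rw [smul_single, smul_eq_mul, mul_one]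
  rw [h1, map_smul, map_smul, LinearMap.comp_apply, LinearMap.comp_apply,
    cycTt_single, Lmul_single, map_smul, Lmul_single, cycTt_single]
  congr 3
  funext j
  rw [shiftT_apply, shiftT_apply]
  by_cases h : j = 0
  · rw [if_pos h, ← mul_assoc, ← mul_assoc, hc]
  · rw [if_neg h, one_mul, one_mul]

/-! ### The subspace `K = range (1 - T̃)` and its quotient -/

/-- `K = (Id − T̃)(C_n)`. -/
def Ksub (v : Γ) (n : ℕ) : Submodule ℂ (BarC Γ n) :=
  LinearMap.range (LinearMap.id - cycTt v n)

/-- Projection to the quotient by `K`. -/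
def piQ (v : Γ) (n : ℕ) : BarC Γ n →ₗ[ℂ] (BarC Γ n ⧸ Ksub v n) :=
  (Ksub v n).mkQ

lemma piQ_eq_zero {v : Γ} {n : ℕ} {x : BarC Γ n} (h : x ∈ Ksub v n) :
    piQ v n x = 0 := by
  rw [piQ, Submodule.mkQ_apply]
  exact (Submodule.Quotient.mk_eq_zero _).mpr h

lemma piQ_cycTt (v : Γ) (n : ℕ) (x : BarC Γ n) :
    piQ v n (cycTt v n x) = piQ v n x := by
  have h : x - cycTt v n x ∈ Ksub v n := ⟨x, rfl⟩
  have := piQ_eq_zero h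
  rw [map_sub] at this
  rw [← sub_eq_zero, ← neg_eq_zero, neg_sub]
  exact this

/-! ### Powers of the cyclic operator and `v`-invariance -/

/-- Cyclic index shift by `k`. -/
def idxShift (n k : ℕ) (j : Fin (n+1)) : Fin (n+1) :=
  ⟨((j:ℕ) + (n+1) - k) % (n+1), Nat.mod_lt _ (by omega)⟩

lemma idxShift_val {n k : ℕ} (hk : k ≤ n+1) (j : Fin (n+1)) :
    ((idxShift n k j : Fin (n+1)) : ℕ) =
      if (j:ℕ) < k then (j:ℕ) + (n+1) - k else (j:ℕ) - k := by
  have hj := j.isLt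
  show ((j:ℕ) + (n+1) - k) % (n+1) = _
  by_cases h : (j:ℕ) < k
  · rw [if_pos h]
    exact Nat.mod_eq_of_lt (by omega)
  · rw [if_neg h]
    have he : (j:ℕ) + (n+1) - k = ((j:ℕ) - k) + (n+1) := by omega
    rw [he, Nat.add_mod_right]
    exact Nat.mod_eq_of_lt (by omega)

/-- The tuple of `T̃^k[g]` (without the sign). -/
def Gk (v : Γ) (n k : ℕ) (g : Fin (n+1) → Γ) : Fin (n+1) → Γ :=
  fun j => (if (j:ℕ) < k then v⁻¹ else 1) * g (idxShift n k j)

lemma Gk_zero (v : Γ) (n : ℕ) (g : Fin (n+1) → Γ) : Gk v n 0 g = g := by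
  funext j
  unfold Gk
  rw [if_neg (by omega), one_mul]
  congr 1
  apply Fin.ext
  rw [idxShift_val (by omega), if_neg (by omega)]
  omega

lemma Gk_last (v : Γ) (n : ℕ) (g : Fin (n+1) → Γ) :
    Gk v n (n+1) g = fun j => v⁻¹ * g j := by
  funext j
  unfold Gk
  rw [if_pos j.isLt]
  congr 2
  apply Fin.ext
  rw [idxShift_val (le_refl _), if_pos j.isLt]
  omega

lemma shiftT_Gk (v : Γ) {n k : ℕ} (hk : k ≤ n) (g : Fin (n+1) → Γ) :
    shiftT v (Gk v n k g) = Gk v n (k+1) g := by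
  funext j
  rw [shiftT_apply]
  unfold Gk
  by_cases h : j = 0
  · have hlast : ((j - 1 : Fin (n+1)) : ℕ) = n := by
      rw [fin_sub_one_val, if_pos (by rw [h]; rfl)]
    have hidx : idxShift n k (j-1) = idxShift n (k+1) j := by
      apply Fin.ext
      rw [idxShift_val (by omega), idxShift_val (by omega), hlast,
        if_neg (by omega), if_pos (by rw [h]; show (0:ℕ) < k+1; omega)]
      have h0 : ((0:Fin (n+1)):ℕ) = 0 := rfl
      rw [h, h0]
      omega
    rw [if_pos h, if_neg (by omega), one_mul,
      if_pos (by rw [h]; show (0:ℕ) < k+1; omega), hidx]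
  · have hj0 : ((j:Fin (n+1)):ℕ) ≠ 0 := fun hc => h (Fin.ext hc)
    have hsub : ((j - 1 : Fin (n+1)) : ℕ) = (j:ℕ) - 1 := by
      rw [fin_sub_one_val, if_neg hj0]
    rw [if_neg h, one_mul]
    have hiff : (((j-1:Fin (n+1)):ℕ) < k) ↔ ((j:ℕ) < k+1) := by
      rw [hsub]; omega
    have hidx : idxShift n k (j-1) = idxShift n (k+1) j := by
      apply Fin.ext
      rw [idxShift_val (by omega), idxShift_val (by omega), hsub]
      have hj := j.isLt
      by_cases hcase : (j:ℕ) < k + 1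
      · rw [if_pos (by omega), if_pos hcase]; omega
      · rw [if_neg (by omega), if_neg hcase]; omega
    rw [hidx]
    by_cases hcase : (j:ℕ) < k + 1
    · rw [if_pos (hiff.mpr hcase), if_pos hcase]
    · rw [if_neg (fun hc => hcase (hiff.mp hc)), if_neg hcase]

lemma cycTt_pow_single (v : Γ) {n : ℕ} (g : Fin (n+1) → Γ) :
    ∀ k, k ≤ n+1 →
      ((cycTt v n)^k) (single g (1:ℂ)) = ((-1:ℂ)^(n*k)) • single (Gk v n k g) 1 := by
  intro k
  induction k with
  | zero =>
    intro _
    rw [pow_zero, Gk_zero]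
    simp
  | succ k ih =>
    intro hk
    rw [pow_succ', Module.End.mul_apply, ih (by omega), map_smul, cycTt_single,
      shiftT_Gk v (by omega), smul_smul]
    congr 1
    rw [← pow_add, Nat.mul_succ]

lemma piQ_cycTt_pow (v : Γ) (n : ℕ) (k : ℕ) (x : BarC Γ n) :
    piQ v n (((cycTt v n)^k) x) = piQ v n x := by
  induction k with
  | zero => rw [pow_zero]; rfl
  | succ k ih => rw [pow_succ', Module.End.mul_apply, piQ_cycTt, ih]

lemma piQ_vinv (v : Γ) (n : ℕ) (g : Fin (n+1) → Γ) :
    piQ v n (single (fun j => v⁻¹ * g j) (1:ℂ)) = piQ v n (single g 1) := by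
  have h := cycTt_pow_single v g (n+1) (le_refl _)
  rw [Gk_last] at h
  have hsgn : ((-1:ℂ))^(n*(n+1)) = 1 := Even.neg_one_pow (Nat.even_mul_succ_self n)
  rw [hsgn, one_smul] at h
  rw [← h, piQ_cycTt_pow]

lemma piQ_Lmul_zpowers (v : Γ) (n : ℕ) {w : Γ} (hw : w ∈ Subgroup.zpowers v) :
    (piQ v n) ∘ₗ (Lmul w n) = piQ v n := by
  rw [Subgroup.zpowers_eq_closure] at hw
  induction hw using Subgroup.closure_induction with
  | mem x hx =>
    have hx' : x = v := hx
    subst hx'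
    apply Finsupp.lhom_ext
    intro g c
    have h1 : single g c = c • single g (1:ℂ) := by rw [smul_single, smul_eq_mul, mul_one]
    rw [h1, map_smul, map_smul, LinearMap.comp_apply, Lmul_single]
    congr 1
    have := piQ_vinv x n (fun j => x * g j)
    simp only [← mul_assoc, inv_mul_cancel, one_mul] at this
    exact this.symm
  | one =>
    rw [Lmul_one, LinearMap.comp_id]
  | mul x y hx hy ihx ihy =>
    rw [Lmul_mul, ← LinearMap.comp_assoc, ihx, ihy]
  | inv x hx ihx =>
    have : (piQ v n) ∘ₗ (Lmul x n) ∘ₗ (Lmul x⁻¹ n) = piQ v n ∘ₗ Lmul x⁻¹ n := by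
      rw [← LinearMap.comp_assoc, ihx]
    rw [← this, ← Lmul_mul, mul_inv_cancel, Lmul_one, LinearMap.comp_id]

/-! ### `K` is stable under `Lmul u` for `u ∈ Z(v)` -/

lemma Lmul_mem_Ksub {v u : Γ} (hu : u ∈ Zc v) {n : ℕ} {x : BarC Γ n}
    (hx : x ∈ Ksub v n) : Lmul u n x ∈ Ksub v n := by
  obtain ⟨z, hz⟩ := hx
  refine ⟨Lmul u n z, ?_⟩
  have h := Lmul_comm_cycTt hu n
  calc ((LinearMap.id - cycTt v n : BarC Γ n →ₗ[ℂ] BarC Γ n)) (Lmul u n z)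
      = Lmul u n z - cycTt v n (Lmul u n z) := rfl
    _ = Lmul u n z - Lmul u n (cycTt v n z) := by
        rw [show cycTt v n (Lmul u n z) = ((cycTt v n) ∘ₗ (Lmul u n)) z from rfl, ← h]; rfl
    _ = Lmul u n (z - cycTt v n z) := by rw [map_sub]
    _ = Lmul u n (((LinearMap.id - cycTt v n : BarC Γ n →ₗ[ℂ] BarC Γ n)) z) := rfl
    _ = Lmul u n x := by rw [hz]

lemma piQ_Lmul_congr {v u : Γ} (hu : u ∈ Zc v) {n : ℕ} {x y : BarC Γ n}
    (hxy : piQ v n x = piQ v n y) :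
    piQ v n (Lmul u n x) = piQ v n (Lmul u n y) := by
  rw [← sub_eq_zero, ← map_sub, ← map_sub]
  apply piQ_eq_zero
  apply Lmul_mem_Ksub hu
  have h0 : piQ v n (x - y) = 0 := by rw [map_sub, hxy, sub_self]
  rw [piQ, Submodule.mkQ_apply] at h0
  exact (Submodule.Quotient.mk_eq_zero _).mp h0

/-! ### Fibers of `pTuple` -/

lemma pTuple_Lmul (v : Γ) {n : ℕ} {h : Γ} (hZ : h ∈ Zc v) (g : Fin (n+1) → Γ) :
    pTuple v (fun j => h * g j) = pTuple v g := by
  have hc := mem_Zc hZ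
  funext j
  unfold pTuple
  by_cases hj : (j:ℕ) = 0
  · rw [dif_pos hj, dif_pos hj, mul_inv_rev]
    have heq : (g (Fin.last n))⁻¹ * h⁻¹ * v * (h * g 0)
        = (g (Fin.last n))⁻¹ * (h⁻¹ * v * h) * g 0 := by group
    rw [heq]
    have h2 : h⁻¹ * v * h = v := by
      rw [mul_assoc, hc, ← mul_assoc, inv_mul_cancel, one_mul]
    rw [h2]
  · rw [dif_neg hj, dif_neg hj, mul_inv_rev]
    group

lemma pTuple_fiber {v : Γ} {n : ℕ} {g g' : Fin (n+1) → Γ}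
    (hpt : pTuple v g = pTuple v g') :
    ∃ h : Γ, h ∈ Zc v ∧ g' = fun j => h * g j := by
  set h : Γ := g' 0 * (g 0)⁻¹ with hh
  have key : ∀ j : Fin (n+1), g' j = h * g j := by
    intro j
    induction j using Fin.induction with
    | zero => rw [hh]; group
    | succ i ih =>
      have hji : ((i.succ : Fin (n+1)) : ℕ) ≠ 0 := by
        simp [Fin.val_succ]
      have h1 := congrFun hpt i.succ
      unfold pTuple at h1
      rw [dif_neg hji, dif_neg hji] at h1
      have hcast : (⟨((i.succ : Fin (n+1)):ℕ) - 1, by have := (i.succ : Fin (n+1)).isLt; omega⟩ : Fin (n+1))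
          = i.castSucc := by
        apply Fin.ext
        simp [Fin.val_succ]
      rw [hcast] at h1
      have h2 : g' i.succ = g' i.castSucc * ((g i.castSucc)⁻¹ * g i.succ) := by
        rw [h1]; group
      rw [h2, ih]
      group
  refine ⟨h, ?_, funext key⟩
  have h0 := congrFun hpt 0
  unfold pTuple at h0
  rw [dif_pos (show ((0:Fin (n+1)):ℕ) = 0 from rfl)] at h0
  rw [key (Fin.last n), key 0] at h0
  rw [Subgroup.mem_centralizer_iff]
  intro w hw
  rw [Set.mem_singleton_iff] at hw
  rw [hw]
  have h2 : (g (Fin.last n))⁻¹ * v * g 0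
      = (g (Fin.last n))⁻¹ * (h⁻¹ * v * h) * g 0 := by
    calc (g (Fin.last n))⁻¹ * v * g 0 = (h * g (Fin.last n))⁻¹ * v * (h * g 0) := h0
      _ = (g (Fin.last n))⁻¹ * (h⁻¹ * v * h) * g 0 := by group
  have h3 : v = h⁻¹ * v * h := mul_left_cancel (mul_right_cancel h2)
  calc v * h = h * (h⁻¹ * v * h) := by group
    _ = h * v := by rw [← h3]

/-! ### `pTuple` and the shift -/

lemma pTuple_apply (v : Γ) {n : ℕ} (g : Fin (n+1) → Γ) (j : Fin (n+1)) :
    pTuple v g j = (g (j - 1))⁻¹ * (if (j:ℕ) = 0 then v else 1) * g j := by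
  unfold pTuple
  by_cases hj : (j:ℕ) = 0
  · rw [dif_pos hj, if_pos hj]
    have hj' : j = 0 := Fin.ext hj
    subst hj'
    rw [fin_zero_sub_one]
  · rw [dif_neg hj, if_neg hj, mul_one]
    rw [show (j - 1 : Fin (n+1)) = ⟨(j:ℕ)-1, by have := j.isLt; omega⟩ from
      Fin.ext (by rw [fin_sub_one_val, if_neg hj])]

lemma pTuple_shiftT (v : Γ) {n : ℕ} (g : Fin (n+1) → Γ) :
    pTuple v (shiftT v g) = fun j => pTuple v g (j - 1) := by
  funext j
  rw [pTuple_apply, pTuple_apply, shiftT_apply, shiftT_apply, mul_inv_rev]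
  by_cases hj : (j:ℕ) = 0
  · have hj' : j = 0 := Fin.ext hj
    subst hj'
    rw [fin_zero_sub_one]
    by_cases hn : n = 0
    · subst hn
      have hl0 : (Fin.last 0) = (0 : Fin 1) := rfl
      rw [hl0]
      simp only [if_pos rfl, Fin.val_zero, if_pos rfl, if_true]
      group
    · have hlne : (Fin.last n) ≠ 0 := by
        intro hcc
        apply hn
        have := congrArg Fin.val hcc
        simpa [Fin.val_last] using this
      have hlv : ¬ ((Fin.last n : Fin (n+1)):ℕ) = 0 := by
        rw [Fin.val_last]; omega
      simp only [if_neg hlne, if_neg hlv, if_pos rfl, Fin.val_zero,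
        if_pos (rfl : (0:ℕ) = 0), if_true]
      group
  · have hjne : j ≠ 0 := fun hcc => hj (by rw [hcc]; rfl)
    simp only [if_neg hjne, if_neg hj]
    by_cases h1 : (j:ℕ) = 1
    · have hj1 : j - 1 = 0 := Fin.ext (by rw [fin_sub_one_val, if_neg hj, h1]; rfl)
      rw [hj1]
      simp only [if_pos rfl, Fin.val_zero, if_pos (rfl : (0:ℕ) = 0), if_true]
      group
    · have hj1v : ¬ ((j - 1 : Fin (n+1)):ℕ) = 0 := by
        rw [fin_sub_one_val, if_neg hj]
        have := j.isLt
        omega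
      have hj1 : j - 1 ≠ 0 := fun hcc => hj1v (by rw [hcc]; rfl)
      simp only [if_neg hj1, if_neg hj1v]
      group

/-- Inverse of the shift. -/
def unshiftT {n : ℕ} (v : Γ) (g : Fin (n+1) → Γ) : Fin (n+1) → Γ :=
  fun j => if j = Fin.last n then v * g 0 else g (j + 1)

lemma shiftT_unshiftT (v : Γ) {n : ℕ} (g : Fin (n+1) → Γ) :
    shiftT v (unshiftT v g) = g := by
  funext j
  rw [shiftT_apply]
  unfold unshiftT
  by_cases h : j = 0
  · subst h
    rw [if_pos rfl, fin_zero_sub_one, if_pos rfl, ← mul_assoc, inv_mul_cancel, one_mul]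
  · rw [if_neg h, one_mul, if_neg ?_, sub_add_cancel]
    intro hcc
    apply h
    have hj : j = Fin.last n + 1 := by
      rw [← hcc, sub_add_cancel]
    rw [hj, Fin.last_add_one]

lemma exists_of_cyc {v : Γ} {n : ℕ} {h : Fin (n+1) → Γ}
    (hex : ∃ g : Fin (n+1) → Γ, pTuple v g = fun j => h (j - 1)) :
    ∃ g : Fin (n+1) → Γ, pTuple v g = h := by
  obtain ⟨g, hg⟩ := hex
  refine ⟨unshiftT v g, funext fun i => ?_⟩
  have h2 := congrFun (pTuple_shiftT v (unshiftT v g)) (i + 1)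
  rw [shiftT_unshiftT, hg] at h2
  have h3 : (i + 1 - 1 : Fin (n+1)) = i := add_sub_cancel_right i 1
  simpa [h3] using h2.symm

lemma cycT_single {n : ℕ} (h : Fin (n+1) → Γ) :
    cycT Γ n (single h (1:ℂ)) = ((-1:ℂ)^n) • single (fun j : Fin (n+1) => h (j - 1)) 1 := by
  rw [cycT, Finsupp.lsum_single]
  rfl

lemma single_eq_smul_single {α : Type} (g : α) (c : ℂ) :
    (single g c : α →₀ ℂ) = c • single g (1:ℂ) := by
  rw [smul_single, smul_eq_mul, mul_one]

/-! ### The averaging operator -/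

section Avg

variable (v : Γ) [Finite (Nquot v)] (σ' : Nquot v → Zc v)

lemma normal_H : ((Subgroup.zpowers v).subgroupOf (Zc v)).Normal := by
  constructor
  intro x hx z
  rw [Subgroup.mem_subgroupOf] at hx ⊢
  obtain ⟨m, hm⟩ := hx
  refine ⟨m, ?_⟩
  have hz : Commute (z:Γ) v := by
    have := Subgroup.mem_centralizer_iff.mp z.2 v rfl
    exact this.symm
  have hzm : Commute (z:Γ) (v^m) := hz.zpow_right m
  show v ^ m = ((z * x * z⁻¹ : Zc v) : Γ)
  push_cast
  rw [← hm, hzm.eq, mul_assoc, mul_inv_cancel, mul_one]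

lemma Nsig_def (n : ℕ) :
    Nsig v σ' n =
      (letI := Fintype.ofFinite (Nquot v);
        ((Nat.card (Nquot v) : ℂ))⁻¹ • ∑ h : Nquot v, Lmul (σ' h : Γ) n) := rfl

lemma Nsig_comm_cycTt (n : ℕ) (x : BarC Γ n) :
    Nsig v σ' n (cycTt v n x) = cycTt v n (Nsig v σ' n x) := by
  letI := Fintype.ofFinite (Nquot v)
  rw [Nsig_def, LinearMap.smul_apply, LinearMap.smul_apply, map_smul]
  congr 1
  rw [LinearMap.sum_apply, LinearMap.sum_apply, map_sum]
  apply Finset.sum_congr rfl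
  intro h _
  have hcomm := LinearMap.ext_iff.mp (Lmul_comm_cycTt (σ' h).2 n) x
  rw [LinearMap.comp_apply, LinearMap.comp_apply] at hcomm
  exact hcomm

lemma piQ_Nsig_cycTt (n : ℕ) (x : BarC Γ n) :
    piQ v n (Nsig v σ' n (cycTt v n x)) = piQ v n (Nsig v σ' n x) := by
  rw [Nsig_comm_cycTt, piQ_cycTt]

lemma piQ_Nsig_fiber (hσ' : ∀ x : Nquot v, QuotientGroup.mk (σ' x) = x)
    {n : ℕ} {g g' : Fin (n+1) → Γ} (hpt : pTuple v g = pTuple v g') :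
    piQ v n (Nsig v σ' n (single g (1:ℂ))) = piQ v n (Nsig v σ' n (single g' 1)) := by
  haveI := normal_H v
  obtain ⟨h, hZ, hg'⟩ := pTuple_fiber hpt
  subst hg'
  letI := Fintype.ofFinite (Nquot v)
  rw [Nsig_def, LinearMap.smul_apply, LinearMap.smul_apply, map_smul, map_smul,
    LinearMap.sum_apply, LinearMap.sum_apply, map_sum, map_sum]
  congr 1
  set q : Nquot v := QuotientGroup.mk (⟨h, hZ⟩ : Zc v) with hq
  have key : ∀ t : Nquot v,
      piQ v n (Lmul (σ' t : Γ) n (single (fun j => h * g j) (1:ℂ)))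
        = piQ v n (Lmul (σ' (t * q) : Γ) n (single g 1)) := by
    intro t
    have hL : Lmul (σ' t : Γ) n (single (fun j => h * g j) (1:ℂ))
        = Lmul ((σ' t : Γ) * h) n (single g 1) := by
      rw [Lmul_single, Lmul_single]
      congr 1
      funext j
      rw [mul_assoc]
    rw [hL]
    set a : Zc v := σ' t * ⟨h, hZ⟩ with ha
    have haΓ : ((σ' t : Γ) * h) = (a : Γ) := rfl
    have hmka : (QuotientGroup.mk a : Nquot v) = t * q := by
      rw [ha, QuotientGroup.mk_mul, hσ', hq]
    have hmkb : (QuotientGroup.mk (σ' (t * q)) : Nquot v) = QuotientGroup.mk a := by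
      rw [hσ', hmka]
    have hw : ((σ' (t * q))⁻¹ * a : Zc v) ∈ (Subgroup.zpowers v).subgroupOf (Zc v) :=
      QuotientGroup.eq.mp hmkb
    rw [Subgroup.mem_subgroupOf] at hw
    have hdecomp : (a : Γ) = (σ' (t * q) : Γ) * (((σ' (t * q))⁻¹ * a : Zc v) : Γ) := by
      push_cast
      rw [← mul_assoc, mul_inv_cancel, one_mul]
    rw [haΓ, hdecomp, Lmul_mul, LinearMap.comp_apply]
    apply piQ_Lmul_congr (σ' (t * q)).2
    exact LinearMap.ext_iff.mp (piQ_Lmul_zpowers v n hw) (single g 1)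
  symm
  calc ∑ t : Nquot v, piQ v n (Lmul (σ' t : Γ) n (single (fun j => h * g j) (1:ℂ)))
      = ∑ t : Nquot v, piQ v n (Lmul (σ' (t * q) : Γ) n (single g 1)) :=
        Finset.sum_congr rfl (fun t _ => key t)
    _ = ∑ t : Nquot v, piQ v n (Lmul (σ' t : Γ) n (single g 1)) :=
        Fintype.sum_equiv (Equiv.mulRight q) _ _ (fun t => rfl)

/-! ### The descended map `r` -/

open Classical in
/-- On a basis tuple `h`: the class of `N_{σ'}[g]` for any `g` with `pTuple v g = h`,
or `0` if there is no such `g`. -/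
def rAux (n : ℕ) (h : Fin (n+1) → Γ) : ℂ →ₗ[ℂ] (BarC Γ n ⧸ Ksub v n) :=
  if hc : ∃ g : Fin (n+1) → Γ, pTuple v g = h then
    LinearMap.toSpanSingleton ℂ _ (piQ v n (Nsig v σ' n (single hc.choose (1:ℂ))))
  else 0

def rMap (n : ℕ) : Htens Γ n →ₗ[ℂ] (BarC Γ n ⧸ Ksub v n) :=
  Finsupp.lsum ℂ (rAux v σ' n)

lemma rAux_spec (hσ' : ∀ x : Nquot v, QuotientGroup.mk (σ' x) = x)
    {n : ℕ} (h : Fin (n+1) → Γ) (g : Fin (n+1) → Γ) (hg : pTuple v g = h) :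
    rAux v σ' n h = LinearMap.toSpanSingleton ℂ _
      (piQ v n (Nsig v σ' n (single g (1:ℂ)))) := by
  have hc : ∃ g : Fin (n+1) → Γ, pTuple v g = h := ⟨g, hg⟩
  rw [rAux, dif_pos hc]
  congr 1
  exact piQ_Nsig_fiber v σ' hσ' (hc.choose_spec.trans hg.symm)

lemma rMap_single (n : ℕ) (h : Fin (n+1) → Γ) (c : ℂ) :
    rMap v σ' n (single h c) = rAux v σ' n h c := by
  rw [rMap, Finsupp.lsum_single]

lemma rMap_pMap (hσ' : ∀ x : Nquot v, QuotientGroup.mk (σ' x) = x)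
    (n : ℕ) (x : BarC Γ n) :
    rMap v σ' n (pMap v n x) = piQ v n (Nsig v σ' n x) := by
  have heq : (rMap v σ' n) ∘ₗ (pMap v n) = (piQ v n) ∘ₗ (Nsig v σ' n) := by
    apply Finsupp.lhom_ext
    intro g c
    rw [LinearMap.comp_apply, LinearMap.comp_apply, single_eq_smul_single,
      map_smul, map_smul, map_smul, map_smul]
    congr 1
    rw [pMap_single, rMap_single, rAux_spec v σ' hσ' (pTuple v g) g rfl,
      LinearMap.toSpanSingleton_apply, one_smul]
  exact LinearMap.ext_iff.mp heq x

lemma rMap_cycT (hσ' : ∀ x : Nquot v, QuotientGroup.mk (σ' x) = x)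
    (n : ℕ) (y : Htens Γ n) :
    rMap v σ' n (cycT Γ n y) = rMap v σ' n y := by
  have heq : (rMap v σ' n) ∘ₗ (cycT Γ n) = rMap v σ' n := by
    apply Finsupp.lhom_ext
    intro h c
    rw [LinearMap.comp_apply, single_eq_smul_single, map_smul, map_smul, map_smul]
    congr 1
    rw [cycT_single, map_smul, rMap_single, rMap_single]
    by_cases hc : ∃ g : Fin (n+1) → Γ, pTuple v g = h
    · obtain ⟨g0, hg0⟩ := hc
      have hshift : pTuple v (shiftT v g0) = fun j : Fin (n+1) => h (j - 1) := by
        rw [pTuple_shiftT, hg0]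
      rw [rAux_spec v σ' hσ' _ (shiftT v g0) hshift,
        rAux_spec v σ' hσ' h g0 hg0,
        LinearMap.toSpanSingleton_apply, LinearMap.toSpanSingleton_apply, one_smul]
      have hone : ((-1:ℂ)^n) * ((-1:ℂ)^n) = 1 := by
        rw [← pow_add]
        exact Even.neg_one_pow ⟨n, rfl⟩
      have h2 : single (shiftT v g0) (1:ℂ) = ((-1:ℂ)^n) • cycTt v n (single g0 1) := by
        rw [cycTt_single, smul_smul, hone, one_smul]
      rw [h2, map_smul, map_smul, piQ_Nsig_cycTt, smul_smul, hone, one_smul]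
    · have hc' : ¬ ∃ g : Fin (n+1) → Γ, pTuple v g = fun j : Fin (n+1) => h (j - 1) :=
        fun hex => hc (exists_of_cyc hex)
      rw [rAux, dif_neg hc', rAux, dif_neg hc]
      simp
  exact LinearMap.ext_iff.mp heq y

end Avg

end AvgAux

/-- if `N(v) = Z(v)/v^ℤ` is finite and `σ'` is a set-theoretic section of
the quotient map, then the averaging operator `N_{σ'}` maps the preimage under `p_v`
of `(Id − T_n)((ℂΓ)^{⊗(n+1)})` into `(Id − T̃_n)(C_n(Γ,ℂv))`. -/
theorem averaging_maps_kernels {Γ : Type} [Group Γ] (v : Γ)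
    [Finite (Nquot v)] (σ' : Nquot v → Zc v)
    (hσ' : ∀ x : Nquot v, QuotientGroup.mk (σ' x) = x) :
    ∀ (n : ℕ) (c : BarC Γ n),
      pMap v n c ∈ LinearMap.range (LinearMap.id - cycT Γ n) →
      Nsig v σ' n c ∈ LinearMap.range (LinearMap.id - cycTt v n) := by
  intro n c hmem
  obtain ⟨y, hy⟩ := hmem
  show Nsig v σ' n c ∈ AvgAux.Ksub v n
  have h0 : AvgAux.piQ v n (Nsig v σ' n c) = 0 := by
    rw [← AvgAux.rMap_pMap v σ' hσ' n c, ← hy, LinearMap.sub_apply,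
      LinearMap.id_apply, map_sub, AvgAux.rMap_cycT v σ' hσ', sub_self]
  rw [AvgAux.piQ, Submodule.mkQ_apply] at h0
  exact (Submodule.Quotient.mk_eq_zero _).mp h0
end
end

section
/- Let Γ be a group and v ∈ Γ. Then: (i) the graded subspace (Id − T̃_*)C_*(Γ,ℂv) is a subcomplex of C_*(Γ,ℂv) (it is stable under the differential ∂) and is stable under the action of Z(v); (ii) if v has infinite order, then the linear map Id − T̃_n : C_n(Γ,ℂv) → C_n(Γ,ℂv) is injective for every n ≥ 0 (equivalently, the automorphism T̃_n has no nonzero fixed vectors, since T̃_n^{n+1} equals the action of v⁻¹). -/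
noncomputable section

open Finsupp

/-- Left translation `h·[g₀,…,gₙ;v] = [hg₀,…,hgₙ;v]` on `C_*(Γ,ℂv)`. -/
def lAct {Γ : Type} [Group Γ] (h : Γ) (n : ℕ) : BarC Γ n →ₗ[ℂ] BarC Γ n :=
  Finsupp.lmapDomain ℂ ℂ fun g => fun j => h * g j
/-!
Write `T̃ₙ = (-1)ⁿ • t` where `t [g₀,…,gₙ] = [v⁻¹gₙ,g₀,…,gₙ₋₁]` is the twisted rotation of tuples.
The face maps satisfy `d₀ t = dₙ₊₁` and `dⱼ₊₁ t = t dⱼ`, whence `∂ (1 - T̃) = (1 - T̃) ∂'` with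
`∂' = ∑_{j ≤ n} (-1)ʲ dⱼ`; and left translation by an element commuting with `v` commutes with
`t`. So the images of `1 - T̃` are carried into each other. Moreover `t^{n+1}` is left
translation by `v⁻¹`, so if `v` has infinite order every `t`-orbit of tuples is infinite; the
support of a fixed vector of `T̃` is a finite `t`-stable set, hence empty.
-/

theorem LinearMap.map_range_le_range_of_comp_eq {R M M' N N' : Type*} [Semiring R]
    [AddCommMonoid M] [AddCommMonoid M'] [AddCommMonoid N] [AddCommMonoid N']
    [Module R M] [Module R M'] [Module R N] [Module R N']
    {A : M →ₗ[R] N} {A' : M' →ₗ[R] N'} {φ : N →ₗ[R] N'} {ψ : M →ₗ[R] M'}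
    (h : φ ∘ₗ A = A' ∘ₗ ψ) : (range A).map φ ≤ range A' := by
  rw [← range_comp, h]
  exact range_comp_le_range ψ A'

theorem Finsupp.eq_zero_of_mapsTo_support {α M : Type*} [Zero M] {f : α → α} (z : α →₀ M)
    (hz : Set.MapsTo f z.support z.support) (hf : ∀ a, (Set.range fun k => f^[k] a).Infinite) :
    z = 0 := by
  by_contra h
  obtain ⟨a, ha⟩ := Finsupp.support_nonempty_iff.mpr h
  exact hf a (z.support.finite_toSet.subset (Set.range_subset_iff.2 fun k => hz.iterate k ha))

def barFace (Γ : Type) (n : ℕ) (i : Fin (n+2)) : BarC Γ (n+1) →ₗ[ℂ] BarC Γ n :=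
  Finsupp.lmapDomain ℂ ℂ (· ∘ i.succAbove)

theorem barD_eq_sum_barFace (Γ : Type) (n : ℕ) :
    barD Γ n = ∑ i : Fin (n+2), (-1 : ℂ) ^ (i : ℕ) • barFace Γ n i := by
  refine Finsupp.lhom_ext fun g c => ?_
  simp [barD, barFace]

section Cyclic

variable {Γ : Type} [Group Γ]

def cycRot (v : Γ) (n : ℕ) (g : Fin (n+1) → Γ) : Fin (n+1) → Γ :=
  Fin.cons (v⁻¹ * g (Fin.last n)) (Fin.init g)

theorem cycTt_eq_smul_lmapDomain (v : Γ) (n : ℕ) :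
    cycTt v n = (-1 : ℂ) ^ n • Finsupp.lmapDomain ℂ ℂ (cycRot v n) := by
  refine Finsupp.lhom_ext fun g c => ?_
  have hrot : (fun j : Fin (n+1) => if j = 0 then v⁻¹ * g (Fin.last n) else g (j - 1)) =
      cycRot v n g := by
    funext j
    cases j using Fin.cases with
    | zero => rfl
    | succ i =>
      simp only [Fin.succ_ne_zero, if_false, cycRot, Fin.cons_succ, Fin.init]
      rw [← Fin.coeSucc_eq_succ, add_sub_cancel_right]
  simp [cycTt, hrot]

open Fin.CommRing in
theorem cycRot_iterate_apply (v : Γ) (n : ℕ) (g : Fin (n+1) → Γ) {k : ℕ} (hk : k ≤ n + 1)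
    (j : Fin (n+1)) :
    (cycRot v n)^[k] g j = (if (j : ℕ) < k then v⁻¹ else 1) * g (j - (k : Fin (n+1))) := by
  induction k generalizing j with
  | zero => simp
  | succ k ih =>
    rw [Function.iterate_succ_apply']
    cases j using Fin.cases with
    | zero =>
      have hnk : ¬ n < k := by omega
      simp only [cycRot, Fin.cons_zero, ih (by omega), Fin.val_last, Fin.val_zero, hnk,
        if_false, one_mul, Nat.zero_lt_succ, if_true]
      congr 2
      rw [eq_neg_of_add_eq_zero_left (Fin.last_add_one n)]
      push_cast
      ring
    | succ i =>
      simp only [cycRot, Fin.cons_succ, Fin.init, ih (by omega), Fin.val_castSucc, Fin.val_succ]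
      congr 2
      · simp
      · rw [← Fin.coeSucc_eq_succ]
        push_cast
        ring

open Fin.CommRing in
theorem cycRot_iterate_succ (v : Γ) (n : ℕ) : (cycRot v n)^[n+1] = (v⁻¹ • ·) := by
  funext g j
  rw [cycRot_iterate_apply v n g le_rfl j, if_pos j.is_lt, Fin.natCast_self, sub_zero]
  rfl

theorem cycRot_injective (v : Γ) (n : ℕ) : Function.Injective (cycRot v n) := by
  have h : Function.Injective ((cycRot v n)^[n+1]) := by
    rw [cycRot_iterate_succ]
    exact MulAction.injective v⁻¹
  rw [Function.iterate_succ] at h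
  exact h.of_comp

theorem cycRot_comp_succAbove_succ (v : Γ) (n : ℕ) (g : Fin (n+2) → Γ) (j : Fin (n+1)) :
    cycRot v (n+1) g ∘ j.succ.succAbove = cycRot v n (g ∘ j.castSucc.succAbove) := by
  funext k
  cases k using Fin.cases with
  | zero => simp [cycRot]
  | succ m => simp [cycRot, Fin.init, Fin.castSucc_succAbove_castSucc]

theorem barFace_zero_comp_cycTt (v : Γ) (n : ℕ) :
    barFace Γ n 0 ∘ₗ cycTt v (n+1) = (-1 : ℂ) ^ (n+1) • barFace Γ n (Fin.last (n+1)) := by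
  simp only [cycTt_eq_smul_lmapDomain, barFace, LinearMap.comp_smul, ← Finsupp.lmapDomain_comp,
    Fin.succAbove_zero, Fin.succAbove_last]
  rfl

theorem barFace_succ_comp_cycTt (v : Γ) (n : ℕ) (j : Fin (n+1)) :
    barFace Γ n j.succ ∘ₗ cycTt v (n+1) = -(cycTt v n ∘ₗ barFace Γ n j.castSucc) := by
  refine Finsupp.lhom_ext fun g c => ?_
  simp only [barFace, cycTt_eq_smul_lmapDomain, LinearMap.comp_apply, LinearMap.smul_apply,
    LinearMap.neg_apply, pow_succ, mul_neg_one, neg_smul, map_neg, map_smul]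
  simp only [Finsupp.lmapDomain_apply, Finsupp.mapDomain_single, cycRot_comp_succAbove_succ]

theorem barD_cycTt_apply (v : Γ) (n : ℕ) (x : BarC Γ (n+1)) :
    barD Γ n (cycTt v (n+1) x) = (-1 : ℂ) ^ (n+1) • barFace Γ n (Fin.last (n+1)) x +
      cycTt v n (∑ j : Fin (n+1), (-1 : ℂ) ^ (j : ℕ) • barFace Γ n j.castSucc x) := by
  rw [barD_eq_sum_barFace, LinearMap.sum_apply, Fin.sum_univ_succ]
  have h0 := LinearMap.congr_fun (barFace_zero_comp_cycTt v n) x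
  have hsucc := fun j => LinearMap.congr_fun (barFace_succ_comp_cycTt v n j) x
  simp only [LinearMap.comp_apply, LinearMap.smul_apply, LinearMap.neg_apply] at h0 hsucc
  simp [h0, hsucc, map_sum, pow_succ]

theorem barD_comp_id_sub_cycTt (v : Γ) (n : ℕ) :
    barD Γ n ∘ₗ (LinearMap.id - cycTt v (n+1)) =
      (LinearMap.id - cycTt v n) ∘ₗ
        ∑ j : Fin (n+1), (-1 : ℂ) ^ (j : ℕ) • barFace Γ n j.castSucc := by
  refine LinearMap.ext fun x => ?_
  have hD : barD Γ n x = ∑ j : Fin (n+1), (-1 : ℂ) ^ (j : ℕ) • barFace Γ n j.castSucc x +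
      (-1 : ℂ) ^ (n+1) • barFace Γ n (Fin.last (n+1)) x := by
    rw [barD_eq_sum_barFace, LinearMap.sum_apply, Fin.sum_univ_castSucc]
    simp only [LinearMap.smul_apply, Fin.val_castSucc, Fin.val_last]
  simp only [LinearMap.comp_apply, LinearMap.sub_apply, LinearMap.id_apply, map_sub,
    barD_cycTt_apply, hD, LinearMap.sum_apply, LinearMap.smul_apply]
  abel

theorem cycRot_smul {v h : Γ} (hvh : Commute h v) (n : ℕ) (g : Fin (n+1) → Γ) :
    cycRot v n (h • g) = h • cycRot v n g := by
  funext j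
  cases j using Fin.cases with
  | zero => simp [cycRot, ← mul_assoc, hvh.inv_right.eq]
  | succ i => rfl

theorem lAct_comp_cycTt {v h : Γ} (hvh : Commute h v) (n : ℕ) :
    lAct h n ∘ₗ cycTt v n = cycTt v n ∘ₗ lAct h n := by
  rw [cycTt_eq_smul_lmapDomain, LinearMap.comp_smul, LinearMap.smul_comp, lAct,
    ← Finsupp.lmapDomain_comp, ← Finsupp.lmapDomain_comp]
  congr 2
  funext g
  exact (cycRot_smul hvh n g).symm

theorem lAct_comp_id_sub_cycTt {v h : Γ} (hvh : Commute h v) (n : ℕ) :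
    lAct h n ∘ₗ (LinearMap.id - cycTt v n) = (LinearMap.id - cycTt v n) ∘ₗ lAct h n := by
  rw [LinearMap.comp_sub, LinearMap.sub_comp, lAct_comp_cycTt hvh, LinearMap.comp_id,
    LinearMap.id_comp]

theorem cycTt_apply_cycRot (v : Γ) (n : ℕ) (z : BarC Γ n) (g : Fin (n+1) → Γ) :
    cycTt v n z (cycRot v n g) = (-1 : ℂ) ^ n * z g := by
  rw [cycTt_eq_smul_lmapDomain, LinearMap.smul_apply, Finsupp.smul_apply,
    Finsupp.lmapDomain_apply, Finsupp.mapDomain_apply (cycRot_injective v n), smul_eq_mul]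

theorem infinite_range_cycRot_iterate {v : Γ} (hv : ¬ IsOfFinOrder v) (n : ℕ)
    (g : Fin (n+1) → Γ) : (Set.range fun k => (cycRot v n)^[k] g).Infinite := by
  have hinj : Function.Injective fun m => (cycRot v n)^[(n+1) * m] g := by
    intro a b hab
    simp only [Function.iterate_mul, cycRot_iterate_succ, smul_iterate] at hab
    have h0 : v⁻¹ ^ a * g 0 = v⁻¹ ^ b * g 0 := congrFun hab 0
    exact injective_pow_iff_not_isOfFinOrder.2 (isOfFinOrder_inv_iff.not.2 hv)
      (mul_right_cancel h0)
  exact (Set.infinite_range_of_injective hinj).mono (Set.range_subset_iff.2 fun m => ⟨_, rfl⟩)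

theorem eq_zero_of_cycTt_eq_self {v : Γ} (hv : ¬ IsOfFinOrder v) {n : ℕ} {z : BarC Γ n}
    (hz : cycTt v n z = z) : z = 0 := by
  refine z.eq_zero_of_mapsTo_support (fun g hg => ?_) (infinite_range_cycRot_iterate hv n)
  rw [Finset.mem_coe, Finsupp.mem_support_iff] at hg ⊢
  rw [← hz, cycTt_apply_cycRot]
  exact mul_ne_zero (pow_ne_zero _ (neg_ne_zero.2 one_ne_zero)) hg

theorem injective_id_sub_cycTt {v : Γ} (hv : ¬ IsOfFinOrder v) (n : ℕ) :
    Function.Injective (LinearMap.id - cycTt v n : BarC Γ n →ₗ[ℂ] BarC Γ n) := by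
  refine (injective_iff_map_eq_zero _).2 fun z hz => eq_zero_of_cycTt_eq_self hv ?_
  rw [LinearMap.sub_apply, LinearMap.id_apply, sub_eq_zero] at hz
  exact hz.symm

end Cyclic

/-- (i) the graded subspace `(Id − T̃_*)C_*(Γ,ℂv)` is a subcomplex of
`C_*(Γ,ℂv)` stable under the action of the centralizer `Z(v)`; (ii) if `v` has
infinite order then `Id − T̃_n` is injective in every degree. -/
theorem one_minus_cyclic_subcomplex_and_injective {Γ : Type} [Group Γ] (v : Γ) :
    -- (i) stability under the differential
    ((∀ n : ℕ, (LinearMap.range (LinearMap.id - cycTt v (n+1))).map (barD Γ n) ≤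
        LinearMap.range (LinearMap.id - cycTt v n)) ∧
     -- (i) stability under the Z(v)-action
     (∀ (n : ℕ), ∀ h ∈ Subgroup.centralizer ({v} : Set Γ),
        (LinearMap.range (LinearMap.id - cycTt v n)).map (lAct h n) ≤
          LinearMap.range (LinearMap.id - cycTt v n))) ∧
    -- (ii) injectivity for v of infinite order
    (¬ IsOfFinOrder v →
      ∀ n : ℕ, Function.Injective (LinearMap.id - cycTt v n : BarC Γ n →ₗ[ℂ] BarC Γ n)) :=
  ⟨⟨fun n => LinearMap.map_range_le_range_of_comp_eq (barD_comp_id_sub_cycTt v n),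
    fun n _ hh => LinearMap.map_range_le_range_of_comp_eq
      (lAct_comp_id_sub_cycTt (Subgroup.mem_centralizer_singleton_iff.1 hh) n)⟩,
    fun hv => injective_id_sub_cycTt hv⟩
end
end

section
/- Let (X,d) be a metric space and g : X → X an isometry such that the displacement ρ := inf_{y∈X} d(y, g(y)) is attained at some point x ∈ X. Let f : ℝ → X be a map such that f(0) = x, f(t + ρ) = g(f(t)) for all t ∈ ℝ, and the restriction of f to [0,ρ] is a geodesic segment, i.e. d(f(s),f(t)) = |s−t| for all s,t ∈ [0,ρ]. Then f is a ρ-local geodesic: d(f(s),f(t)) = |s−t| for all s,t ∈ ℝ with |s−t| ≤ ρ. -/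
/-!
Since `g` is an isometry and `f (u + ρ) = g (f u)`, the function `u ↦ d(f u, f (u + δ))` is
`ρ`-periodic, so it suffices to take `u ∈ [0, ρ]`. If `u + δ ≤ ρ` both points lie on the segment.
Otherwise going through `f ρ = g (f 0)` gives `d(f u, f (u + δ)) ≤ δ`, while the minimality of the
displacement at `f u` gives `ρ ≤ d(f u, g (f u)) ≤ d(f u, f (u + δ)) + (ρ - δ)`.
-/

open Set

section

variable {X : Type*} [PseudoMetricSpace X] {g : X → X} {f : ℝ → X} {ρ : ℝ}

theorem dist_add_period_eq (hg : Isometry g) (hf : ∀ t, f (t + ρ) = g (f t)) (s t : ℝ) :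
    dist (f (s + ρ)) (f (t + ρ)) = dist (f s) (f t) := by
  rw [hf, hf, hg.dist_eq]

theorem periodic_dist_apply_add (hg : Isometry g) (hf : ∀ t, f (t + ρ) = g (f t)) (δ : ℝ) :
    Function.Periodic (fun u => dist (f u) (f (u + δ))) ρ := fun u => by
  simpa only [add_right_comm u ρ δ] using dist_add_period_eq hg hf u (u + δ)

theorem dist_apply_add_eq_of_mem_Icc (hg : Isometry g) (hf : ∀ t, f (t + ρ) = g (f t))
    (hmin : ∀ y, ρ ≤ dist y (g y))
    (hgeo : ∀ s ∈ Icc 0 ρ, ∀ t ∈ Icc 0 ρ, dist (f s) (f t) = |s - t|)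
    {u δ : ℝ} (hu : u ∈ Icc 0 ρ) (hδ : δ ∈ Icc 0 ρ) :
    dist (f u) (f (u + δ)) = δ := by
  obtain ⟨hu₀, huρ⟩ := hu
  obtain ⟨hδ₀, hδρ⟩ := hδ
  rcases le_or_gt (u + δ) ρ with hle | hlt
  · rw [hgeo u ⟨hu₀, huρ⟩ (u + δ) ⟨by linarith, hle⟩, sub_add_cancel_left, abs_neg,
      abs_of_nonneg hδ₀]
  set v := u + δ - ρ
  have hv : u + δ = v + ρ := by ring
  have hv_mem : v ∈ Icc 0 ρ := ⟨by linarith, by linarith⟩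
  have hgeo_of_le : ∀ s ∈ Icc 0 ρ, ∀ t ∈ Icc 0 ρ, s ≤ t → dist (f s) (f t) = t - s :=
    fun s hs t ht hst => by rw [hgeo s hs t ht, abs_sub_comm, abs_of_nonneg (by linarith)]
  have hρ_mem : ρ ∈ Icc 0 ρ := ⟨hu₀.trans huρ, le_rfl⟩
  have h_upper : dist (f u) (f (u + δ)) ≤ δ :=
    calc dist (f u) (f (u + δ)) ≤ dist (f u) (f ρ) + dist (f (0 + ρ)) (f (v + ρ)) := by
          rw [zero_add, ← hv]; exact dist_triangle _ _ _
      _ = δ := by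
          rw [dist_add_period_eq hg hf, hgeo_of_le u ⟨hu₀, huρ⟩ ρ hρ_mem huρ,
            hgeo_of_le 0 ⟨le_rfl, hρ_mem.1⟩ v hv_mem hv_mem.1]
          ring
  have h_lower : ρ ≤ dist (f u) (f (u + δ)) + (ρ - δ) :=
    calc ρ ≤ dist (f u) (f (u + ρ)) := hf u ▸ hmin (f u)
      _ ≤ dist (f u) (f (v + ρ)) + dist (f (v + ρ)) (f (u + ρ)) := dist_triangle _ _ _
      _ = dist (f u) (f (u + δ)) + (ρ - δ) := by
          rw [dist_add_period_eq hg hf, ← hv, hgeo_of_le v hv_mem u ⟨hu₀, huρ⟩ (by linarith)]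
          ring
  linarith

end

theorem local_geodesic_of_axis_general {X : Type} [MetricSpace X]
    (g : X → X) (hgiso : Isometry g)
    (ρ : ℝ)
    (hmin : ∀ y : X, ρ ≤ dist y (g y))
    (f : ℝ → X)
    (hfper : ∀ t : ℝ, f (t + ρ) = g (f t))
    (hfgeo : ∀ s t : ℝ, s ∈ Set.Icc (0:ℝ) ρ → t ∈ Set.Icc (0:ℝ) ρ →
      dist (f s) (f t) = |s - t|) :
    ∀ s t : ℝ, |s - t| ≤ ρ → dist (f s) (f t) = |s - t| := by
  intro s t hst
  wlog hle : s ≤ t generalizing s t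
  · rw [abs_sub_comm] at hst
    rw [dist_comm, abs_sub_comm]
    exact this t s hst (le_of_not_ge hle)
  rw [abs_sub_comm, abs_of_nonneg (sub_nonneg.mpr hle)] at hst ⊢
  have hδ : t - s ∈ Icc 0 ρ := ⟨sub_nonneg.mpr hle, hst⟩
  rcases (hδ.1.trans hδ.2).eq_or_lt with hρ | hρ
  · obtain rfl : s = t := by linarith
    simp
  obtain ⟨u, hu, hsu⟩ := (periodic_dist_apply_add hgiso hfper (t - s)).exists_mem_Ico₀ hρ s
  have := dist_apply_add_eq_of_mem_Icc hgiso hfper hmin (fun s hs t ht => hfgeo s t hs ht)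
    (Ico_subset_Icc_self hu) hδ
  simpa only [add_sub_cancel, ← hsu] using this

/-- let `g` be an isometry of a metric space whose displacement
`ρ = inf_y d(y, g y)` is attained at `x`, and let `f : ℝ → X` satisfy `f 0 = x`,
`f (t+ρ) = g (f t)`, with `f` geodesic on `[0,ρ]`.  Then `f` is a `ρ`-local geodesic. -/
theorem local_geodesic_of_axis {X : Type} [MetricSpace X]
    (g : X → X) (hgiso : Isometry g) (hgbij : Function.Bijective g)
    (ρ : ℝ) (x : X)
    (hx : dist x (g x) = ρ)
    (hmin : ∀ y : X, ρ ≤ dist y (g y))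
    (f : ℝ → X)
    (hf0 : f 0 = x)
    (hfper : ∀ t : ℝ, f (t + ρ) = g (f t))
    (hfgeo : ∀ s t : ℝ, s ∈ Set.Icc (0:ℝ) ρ → t ∈ Set.Icc (0:ℝ) ρ →
      dist (f s) (f t) = |s - t|) :
    ∀ s t : ℝ, |s - t| ≤ ρ → dist (f s) (f t) = |s - t| :=
  local_geodesic_of_axis_general g hgiso ρ hmin f hfper hfgeo
end

section
/- There exist functions L, C₀ : [0,∞) → (0,∞) such that the following holds for every δ ≥ 0. Let (X,d) be a proper geodesic metric space which is Gromov δ-hyperbolic, and let g be an isometry of X whose displacement ρ_g = inf_{y} d(y,g(y)) is attained and satisfies ρ_g ≥ L(δ). Then for every x in the set Min(g) = {y ∈ X : d(y,g(y)) = ρ_g} of points of minimal displacement and every map f : ℝ → X with f(0) = x, f(t+ρ_g) = g(f(t)) for all t ∈ ℝ, and d(f(s),f(t)) = |s−t| for all s,t ∈ [0,ρ_g], one has Min(g) ⊆ {y ∈ X : dist(y, f(ℝ)) ≤ C₀(δ)}. -/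
/-- The Gromov product `(x|y)_w = ½(d(x,w) + d(y,w) − d(x,y))`. -/
noncomputable def gromovProd {X : Type} [MetricSpace X] (x y w : X) : ℝ :=
  (dist x w + dist y w - dist x y) / 2

/-- Gromov `δ`-hyperbolicity (four point condition). -/
def GromovHyperbolic (X : Type) [MetricSpace X] (δ : ℝ) : Prop :=
  ∀ x y z w : X, min (gromovProd x y w) (gromovProd y z w) - δ ≤ gromovProd x z w

def GeodesicSpace (X : Type) [MetricSpace X] : Prop :=
  ∀ x y : X, ∃ γ : ℝ → X, γ 0 = x ∧ γ (dist x y) = y ∧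
    ∀ s t : ℝ, s ∈ Set.Icc 0 (dist x y) → t ∈ Set.Icc 0 (dist x y) →
      dist (γ s) (γ t) = |s - t|

/-!
Let `p = f a` be a point of the axis almost nearest to `y ∈ Min(g)`, at distance `d`, and
`q = g p = f (a + ρ)`. Since every subpath of length `ρ` of the axis is geodesic (this uses
that `ρ` is the minimal displacement), thinness of the triangle `y p q` forces the Gromov
product `(y|q)_p` to be `O(δ)`, and likewise `(g y|p)_q`. Hence `d(y, q)` and `d(g y, p)` are
both about `d + ρ`, and the four point condition at `y` for `p, q, g y` gives
`min(d, ρ) ≤ 5δ + O(1)`. As `ρ` is large, `d ≤ 5δ + O(1)`.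
-/

def IsLocalGeodesic {X : Type} [MetricSpace X] (k : ℝ) (f : ℝ → X) : Prop :=
  ∀ u v, u ≤ v → v ≤ u + k → dist (f u) (f v) = v - u

section GromovProduct

variable {X : Type} [MetricSpace X]

theorem gromovProd_nonneg (x y w : X) : 0 ≤ gromovProd x y w := by
  unfold gromovProd
  linarith [dist_triangle x w y, dist_comm y w]

theorem gromovProd_le_dist (x y w : X) : gromovProd x y w ≤ dist w y := by
  unfold gromovProd
  linarith [dist_triangle x y w, dist_comm y w]

theorem GromovHyperbolic.gromovProd_le_of_between {δ ε : ℝ} (hX : GromovHyperbolic X δ)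
    {z p q w : X} (hbetween : dist p w + dist w q = dist p q)
    (hw : dist p w = gromovProd z q p) (hnear : dist z p ≤ dist z w + ε) :
    gromovProd z q p ≤ 2 * δ + ε := by
  have h := hX z q w p
  have hqw : gromovProd q w p = gromovProd z q p := by
    unfold gromovProd at hw ⊢
    linarith [dist_comm p q, dist_comm p w, dist_comm w q]
  rw [hqw, min_self] at h
  unfold gromovProd at h hw ⊢
  linarith [dist_comm p w]

end GromovProduct

namespace IsLocalGeodesic

variable {X : Type} [MetricSpace X] {k : ℝ} {f : ℝ → X}

theorem comp_neg (hf : IsLocalGeodesic k f) : IsLocalGeodesic k (fun t => f (-t)) := by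
  intro u v huv hvu
  rw [dist_comm, hf (-v) (-u) (by linarith) (by linarith)]
  ring

theorem gromovProd_le {δ ε : ℝ} (hX : GromovHyperbolic X δ) (hf : IsLocalGeodesic k f)
    {z : X} {a b : ℝ} (hab : a ≤ b) (hbk : b ≤ a + k)
    (hnear : ∀ s, dist z (f a) ≤ dist z (f s) + ε) :
    gromovProd z (f b) (f a) ≤ 2 * δ + ε := by
  set t := gromovProd z (f b) (f a)
  have hab' := hf a b hab hbk
  have ht0 : 0 ≤ t := gromovProd_nonneg _ _ _
  have htb : t ≤ b - a := hab' ▸ gromovProd_le_dist _ _ _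
  have hat := hf a (a + t) (by linarith) (by linarith)
  have htb' := hf (a + t) b (by linarith) (by linarith)
  refine hX.gromovProd_le_of_between (w := f (a + t)) ?_ (by linarith) (hnear _)
  linarith

end IsLocalGeodesic

section Axis

variable {X : Type} [MetricSpace X] {g : X → X} {ρ : ℝ} {f : ℝ → X}

/-- Across the point `f ρ`, the lower bound comes from the minimality of the displacement
`d(f u, g (f u)) = d(f u, f (u + ρ))`. -/
theorem dist_axis_of_mem_Icc_of_mem_Icc (hg : Isometry g) (hmin : ∀ y, ρ ≤ dist y (g y))
    (hfg : ∀ t, f (t + ρ) = g (f t))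
    (hseg : ∀ s t, s ∈ Set.Icc 0 ρ → t ∈ Set.Icc 0 ρ → dist (f s) (f t) = |s - t|)
    {u v : ℝ} (hu : u ∈ Set.Icc 0 ρ) (hv : v ∈ Set.Icc ρ (u + ρ)) :
    dist (f u) (f v) = v - u := by
  obtain ⟨hu0, huρ⟩ := hu
  obtain ⟨hρv, hvu⟩ := hv
  have hρ : 0 ≤ ρ := hu0.trans huρ
  have hv' : f v = g (f (v - ρ)) := by rw [← hfg, sub_add_cancel]
  have hρ' : f ρ = g (f 0) := by rw [← hfg, zero_add]
  have h_uρ : dist (f u) (f ρ) = ρ - u := by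
    rw [hseg u ρ ⟨hu0, huρ⟩ ⟨hρ, le_rfl⟩, abs_sub_comm, abs_of_nonneg (by linarith)]
  have h_ρv : dist (f ρ) (f v) = v - ρ := by
    rw [hρ', hv', hg.dist_eq, hseg 0 (v - ρ) ⟨le_rfl, hρ⟩ ⟨by linarith, by linarith⟩,
      abs_sub_comm, abs_of_nonneg (by linarith), sub_zero]
  have h_vu : dist (f v) (f (u + ρ)) = u + ρ - v := by
    rw [hv', hfg, hg.dist_eq, hseg (v - ρ) u ⟨by linarith, by linarith⟩ ⟨hu0, huρ⟩,
      abs_of_nonpos (by linarith)]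
    ring
  have hdisp : ρ ≤ dist (f u) (f (u + ρ)) := hfg u ▸ hmin (f u)
  linarith [dist_triangle (f u) (f ρ) (f v), dist_triangle (f u) (f v) (f (u + ρ))]

theorem isLocalGeodesic_of_axis (hg : Isometry g) (hmin : ∀ y, ρ ≤ dist y (g y))
    (hfg : ∀ t, f (t + ρ) = g (f t))
    (hseg : ∀ s t, s ∈ Set.Icc 0 ρ → t ∈ Set.Icc 0 ρ → dist (f s) (f t) = |s - t|)
    (hρ : 0 < ρ) : IsLocalGeodesic ρ f := by
  intro u v huv hvu
  set h := v - u
  have hperiodic : Function.Periodic (fun t => dist (f t) (f (t + h))) ρ := by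
    intro t
    simp only [add_right_comm t ρ h, hfg, hg.dist_eq]
  obtain ⟨c, ⟨hc0, hcρ⟩, hc⟩ := hperiodic.exists_mem_Ico₀ hρ u
  rw [show v = u + h by ring, hc]
  rcases le_total (c + h) ρ with hch | hch
  · rw [hseg c (c + h) ⟨hc0, hcρ.le⟩ ⟨by linarith, hch⟩, abs_sub_comm,
      abs_of_nonneg (by linarith), add_sub_cancel_left]
  · rw [dist_axis_of_mem_Icc_of_mem_Icc hg hmin hfg hseg ⟨hc0, hcρ.le⟩ ⟨hch, by linarith⟩,
      add_sub_cancel_left]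

theorem GromovHyperbolic.dist_axis_le {δ ε : ℝ} (hX : GromovHyperbolic X δ) (hg : Isometry g)
    (hf : IsLocalGeodesic ρ f) (hfg : ∀ t, f (t + ρ) = g (f t)) {y : X}
    (hy : dist y (g y) = ρ) {a : ℝ} (hnear : ∀ s, dist y (f a) ≤ dist y (f s) + ε)
    (hρ : 5 * δ + 2 * ε < ρ) : dist y (f a) ≤ 5 * δ + 2 * ε := by
  have hρ0 : 0 ≤ ρ := hy ▸ dist_nonneg
  set p := f a
  set q := f (a + ρ)
  have hq : q = g p := hfg a
  have hpq : dist p q = ρ := by rw [hf a (a + ρ) (by linarith) le_rfl]; ring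
  have hgyq : dist (g y) q = dist y p := by rw [hq, hg.dist_eq]
  have hyq : gromovProd y q p ≤ 2 * δ + ε := hf.gromovProd_le hX (by linarith) le_rfl hnear
  -- `range f` is `g`-invariant, so `g y` is almost nearest to `q`; reversing the axis puts `q` first.
  have hgyp : gromovProd (g y) p q ≤ 2 * δ + ε := by
    have hnear' : ∀ s, dist (g y) (f (-(-(a + ρ)))) ≤ dist (g y) (f (-s)) + ε := by
      intro s
      rw [neg_neg, show -s = -s - ρ + ρ by ring, hfg (-s - ρ), hg.dist_eq]
      change dist (g y) q ≤ _
      rw [hgyq]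
      exact hnear _
    simpa only [neg_neg] using
      hf.comp_neg.gromovProd_le hX (a := -(a + ρ)) (b := -a) (by linarith) (by linarith) hnear'
  have h4 : min (gromovProd p q y) (gromovProd q (g y) y) ≤ gromovProd p (g y) y + δ := by
    linarith [hX p q (g y) y]
  unfold gromovProd at hyq hgyp h4
  rcases min_le_iff.mp h4 with h | h <;>
    linarith [dist_comm p y, dist_comm q y, dist_comm (g y) y, dist_comm q (g y),
      dist_comm p (g y), dist_comm p q]

end Axis

/-- there are functions `L, C₀ : [0,∞) → (0,∞)` such that for every proper
geodesic `δ`-hyperbolic space `X` and every isometry `g` of `X` whose displacement `ρ_g`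
is attained and satisfies `ρ_g ≥ L δ`, the set `Min(g)` of points of minimal displacement
is contained in the `C₀ δ`-neighbourhood of the image of any `g`-axis `f` through a point
of `Min(g)`. -/
theorem min_set_close_to_axis :
    ∃ L C₀ : ℝ → ℝ,
      (∀ δ : ℝ, 0 ≤ δ → 0 < L δ ∧ 0 < C₀ δ) ∧
      ∀ (δ : ℝ), 0 ≤ δ →
      ∀ (X : Type) (_ : MetricSpace X), ProperSpace X → GeodesicSpace X →
        GromovHyperbolic X δ →
      ∀ (g : X → X), Isometry g → Function.Bijective g →
      ∀ (ρ : ℝ), (∀ y : X, ρ ≤ dist y (g y)) → L δ ≤ ρ →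
      ∀ x : X, dist x (g x) = ρ →
      ∀ f : ℝ → X, f 0 = x → (∀ t : ℝ, f (t + ρ) = g (f t)) →
        (∀ s t : ℝ, s ∈ Set.Icc (0:ℝ) ρ → t ∈ Set.Icc (0:ℝ) ρ →
          dist (f s) (f t) = |s - t|) →
      ∀ y : X, dist y (g y) = ρ → Metric.infDist y (Set.range f) ≤ C₀ δ := by
  refine ⟨fun δ => 5 * δ + 2, fun δ => 5 * δ + 1,
    fun δ hδ => ⟨by positivity, by positivity⟩, ?_⟩
  intro δ hδ X _ _ _ hX g hg _ ρ hmin hLρ _ _ f _ hfg hseg y hy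
  have hf : IsLocalGeodesic ρ f := isLocalGeodesic_of_axis hg hmin hfg hseg (by linarith)
  obtain ⟨_, ⟨a, rfl⟩, ha⟩ := (Metric.infDist_lt_iff (Set.range_nonempty f)).mp
    (lt_add_of_pos_right (Metric.infDist y (Set.range f)) one_half_pos)
  have hnear : ∀ s, dist y (f a) ≤ dist y (f s) + 1 / 2 := fun s => by
    linarith [Metric.infDist_le_dist_of_mem (x := y) (Set.mem_range_self (f := f) s)]
  calc Metric.infDist y (Set.range f) ≤ dist y (f a) :=
        Metric.infDist_le_dist_of_mem (Set.mem_range_self a)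
    _ ≤ 5 * δ + 2 * (1 / 2) := hX.dist_axis_le hg hf hfg hy hnear (by linarith)
    _ = 5 * δ + 1 := by ring
end
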